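/- Let 0 < q < 1, 0 < a < q^{-1} and b < 0. Then for all n, n' ∈ ℕ the series below converges absolutely and the two dual q-Meixner families are mutually orthogonal: Σ_{m=0}^{∞} [(−1)^m q^{m(m−1)/2} / (q;q)_m] · M_n(q^{−m};a,−b/a;q) · M_{n'}(q^{−m};b,−a/b;q) = 0. -/

import Mathlib

open scoped BigOperators

/-- The q-shifted factorial `(a;q)_k`. -/
noncomputable def qPoch (q a : ℝ) (k : ℕ) : ℝ :=
  ∏ j ∈ Finset.range k, (1 - a * q ^ j)

/-- The q-Meixner polynomials `M_n(q^{-x};a,b;q)`. -/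
noncomputable def qMeixner (q a b : ℝ) (n x : ℕ) : ℝ :=
  ∑ k ∈ Finset.range (n + 1),
    qPoch q (q ^ (-(n : ℤ))) k * qPoch q (q ^ (-(x : ℤ))) k /
      (qPoch q (a * q) k * qPoch q q k) * (-q ^ (n + 1) / b) ^ k

/-!
The weight `w m = (-1)^m q^(m(m-1)/2) / (q;q)_m` is the coefficient sequence of Euler's expansion
`E z = ∑ w m z^m = (z;q)_∞`, which vanishes at every `z = q^{-s}`. As `E (q^{-s})` is the `s`-th
moment of `w` against `q^{-m}`, the weight annihilates every polynomial in `q^{-m}`, in particular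
the product of any two q-Meixner polynomials. Instead of the product formula we only use the
functional equation `E z = (1 - z) E (q z)`, which follows from the recursion of `w`, and `E 1 = 0`.
-/

open Polynomial Filter

noncomputable def qWeight (q : ℝ) (m : ℕ) : ℝ :=
  (-1 : ℝ) ^ m * q ^ (m * (m - 1) / 2) / qPoch q q m

lemma qPoch_succ (q a : ℝ) (k : ℕ) : qPoch q a (k + 1) = qPoch q a k * (1 - a * q ^ k) :=
  Finset.prod_range_succ _ _

section Weight

variable {q : ℝ}

lemma one_sub_pow_succ_pos (hq0 : 0 < q) (hq1 : q < 1) (k : ℕ) : 0 < 1 - q ^ (k + 1) := by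
  linarith [pow_lt_one₀ hq0.le hq1 (Nat.add_one_ne_zero k)]

lemma qPoch_self_pos (hq0 : 0 < q) (hq1 : q < 1) (k : ℕ) : 0 < qPoch q q k :=
  Finset.prod_pos fun j _ => by rw [← pow_succ']; exact one_sub_pow_succ_pos hq0 hq1 j

lemma qWeight_succ_mul (hq0 : 0 < q) (hq1 : q < 1) (m : ℕ) :
    qWeight q (m + 1) * (1 - q ^ (m + 1)) = -(qWeight q m * q ^ m) := by
  have hP := (qPoch_self_pos hq0 hq1 m).ne'
  have hS := (one_sub_pow_succ_pos hq0 hq1 m).ne'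
  rw [qWeight, qWeight, qPoch_succ, ← pow_succ', Nat.triangle_succ]
  field_simp
  ring

lemma summable_qWeight_mul_pow (hq0 : 0 < q) (hq1 : q < 1) (z : ℝ) :
    Summable fun m => qWeight q m * z ^ m := by
  have h1q : 0 < 1 - q := by linarith
  refine summable_of_ratio_norm_eventually_le (r := 1 / 2) (by norm_num) ?_
  have hsmall : ∀ᶠ m : ℕ in atTop, q ^ m * |z| ≤ (1 - q) / 2 := by
    have h := (tendsto_pow_atTop_nhds_zero_of_lt_one hq0.le hq1).mul_const |z|
    rw [zero_mul] at h
    exact h.eventually_le_const (by linarith)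
  filter_upwards [hsmall] with m hm
  -- the ratio of consecutive terms is `q^m |z| / (1 - q^(m+1))`
  set A := |qWeight q (m + 1)| * |z| ^ (m + 1)
  set B := |qWeight q m| * |z| ^ m
  have hrec : A * (1 - q ^ (m + 1)) = B * (q ^ m * |z|) := by
    have := congrArg (fun t => |t| * |z| ^ (m + 1)) (qWeight_succ_mul hq0 hq1 m)
    simp only [abs_neg, abs_mul, abs_of_pos (one_sub_pow_succ_pos hq0 hq1 m), abs_pow,
      abs_of_pos hq0] at this
    linear_combination this
  have hq : q ^ (m + 1) ≤ q := pow_le_of_le_one hq0.le hq1.le (Nat.succ_ne_zero m)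
  simp only [Real.norm_eq_abs, abs_mul, abs_pow]
  refine le_of_mul_le_mul_right ?_ h1q
  calc A * (1 - q) ≤ A * (1 - q ^ (m + 1)) := by gcongr
    _ = B * (q ^ m * |z|) := hrec
    _ ≤ B * ((1 - q) / 2) := by gcongr
    _ = 1 / 2 * B * (1 - q) := by ring

lemma tsum_qWeight_mul_pow_eq (hq0 : 0 < q) (hq1 : q < 1) (z : ℝ) :
    ∑' m, qWeight q m * z ^ m = (1 - z) * ∑' m, qWeight q m * (q * z) ^ m := by
  have hz := (summable_qWeight_mul_pow hq0 hq1 z).hasSum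
  have hqz := (summable_qWeight_mul_pow hq0 hq1 (q * z)).hasSum
  set E' := ∑' m, qWeight q m * (q * z) ^ m
  -- `E z - E (q z)` has terms `w m (1 - q^m) z^m`; the recursion of `w` turns the terms for
  -- `m + 1` into `-z` times those of `E (q z)`, and the term for `m = 0` vanishes.
  have hdiff := hz.sub hqz
  have hshift : HasSum
      (fun m => qWeight q (m + 1) * z ^ (m + 1) - qWeight q (m + 1) * (q * z) ^ (m + 1))
      (-z * E') := by
    refine (hqz.mul_left (-z)).congr_fun fun m => ?_
    have := qWeight_succ_mul hq0 hq1 m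
    rw [mul_pow, mul_pow]
    linear_combination z ^ (m + 1) * this
  rw [← hasSum_nat_add_iff' 1] at hdiff
  simp only [Finset.range_one, Finset.sum_singleton, pow_zero, sub_self, sub_zero] at hdiff
  linear_combination hdiff.unique hshift

lemma tsum_qWeight_mul_inv_pow_pow (hq0 : 0 < q) (hq1 : q < 1) (s : ℕ) :
    ∑' m, qWeight q m * ((q⁻¹) ^ s) ^ m = 0 := by
  induction s with
  | zero => rw [tsum_qWeight_mul_pow_eq hq0 hq1, pow_zero, sub_self, zero_mul]
  | succ s ih =>
    rw [tsum_qWeight_mul_pow_eq hq0 hq1, pow_succ', ← mul_assoc, mul_inv_cancel₀ hq0.ne',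
      one_mul, ih, mul_zero]

lemma hasSum_qWeight_mul_eval (hq0 : 0 < q) (hq1 : q < 1) (p : ℝ[X]) :
    HasSum (fun m => qWeight q m * p.eval ((q⁻¹) ^ m)) 0 := by
  induction p using Polynomial.induction_on' with
  | add p r hp hr =>
    simpa only [eval_add, mul_add, add_zero] using hp.add hr
  | monomial s c =>
    have h := (summable_qWeight_mul_pow hq0 hq1 ((q⁻¹) ^ s)).hasSum.mul_left c
    rw [tsum_qWeight_mul_inv_pow_pow hq0 hq1 s, mul_zero] at h
    refine h.congr_fun fun m => ?_
    rw [eval_monomial, ← pow_mul, mul_comm m s, pow_mul]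
    ring

end Weight

noncomputable def qPochPoly (q : ℝ) (k : ℕ) : ℝ[X] :=
  ∏ j ∈ Finset.range k, (1 - X * C (q ^ j))

lemma eval_qPochPoly (q x : ℝ) (k : ℕ) : (qPochPoly q k).eval x = qPoch q x k := by
  simp [qPochPoly, qPoch, eval_prod]

noncomputable def qMeixnerPoly (q a b : ℝ) (n : ℕ) : ℝ[X] :=
  ∑ k ∈ Finset.range (n + 1),
    C (qPoch q (q ^ (-(n : ℤ))) k / (qPoch q (a * q) k * qPoch q q k) * (-q ^ (n + 1) / b) ^ k) *
      qPochPoly q k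

lemma eval_qMeixnerPoly (q a b : ℝ) (n x : ℕ) :
    (qMeixnerPoly q a b n).eval ((q⁻¹) ^ x) = qMeixner q a b n x := by
  have hx : q ^ (-(x : ℤ)) = (q⁻¹) ^ x := by rw [zpow_neg, zpow_natCast, inv_pow]
  rw [qMeixner, qMeixnerPoly, eval_finsetSum, hx]
  refine Finset.sum_congr rfl fun k _ => ?_
  rw [eval_mul, eval_C, eval_qPochPoly]
  ring

theorem qMeixner_mutual_orthogonality_general
    (q a b : ℝ) (hq0 : 0 < q) (hq1 : q < 1) (n n' : ℕ) :
    Summable (fun m : ℕ =>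
      |(-1 : ℝ) ^ m * q ^ (m * (m - 1) / 2) / qPoch q q m *
        qMeixner q a (-(b / a)) n m * qMeixner q b (-(a / b)) n' m|) ∧
    ∑' m : ℕ,
        (-1 : ℝ) ^ m * q ^ (m * (m - 1) / 2) / qPoch q q m *
          qMeixner q a (-(b / a)) n m * qMeixner q b (-(a / b)) n' m = 0 := by
  have h := hasSum_qWeight_mul_eval hq0 hq1
    (qMeixnerPoly q a (-(b / a)) n * qMeixnerPoly q b (-(a / b)) n')
  simp only [eval_mul, eval_qMeixnerPoly, ← mul_assoc] at h
  exact ⟨summable_abs_iff.mpr h.summable, h.tsum_eq⟩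

theorem qMeixner_mutual_orthogonality
    (q a b : ℝ) (hq0 : 0 < q) (hq1 : q < 1)
    (ha0 : 0 < a) (ha1 : a < q⁻¹) (hb : b < 0) (n n' : ℕ) :
    Summable (fun m : ℕ =>
      |(-1 : ℝ) ^ m * q ^ (m * (m - 1) / 2) / qPoch q q m *
        qMeixner q a (-(b / a)) n m * qMeixner q b (-(a / b)) n' m|) ∧
    ∑' m : ℕ,
        (-1 : ℝ) ^ m * q ^ (m * (m - 1) / 2) / qPoch q q m *
          qMeixner q a (-(b / a)) n m * qMeixner q b (-(a / b)) n' m = 0 :=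
  qMeixner_mutual_orthogonality_general q a b hq0 hq1 n n'
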